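/- Let φ : ℝ² → ℝ be twice continuously differentiable with compact support contained in the open unit disc D1, and let f = (d⊥)²φ be the symmetric 2-tensor field with components f11 = ∂²φ/∂x2², f12 = −∂²φ/∂x1∂x2, f22 = ∂²φ/∂x1². Then for every x ∈ ℝ²: φ(x) = (1/(2 u2)) ∫₀^∞ Tf(x + s e2) ds = (1/(2 u2)) ∫₀^∞ Mf(x + s e1) ds. -/

import Mathlib

noncomputable section

open MeasureTheory

/-- The divergent beam transform `X_w h (x) = ∫₀^∞ h(x + t w) dt`. -/
def Xbeam (w : ℝ × ℝ) (h : ℝ × ℝ → ℝ) (x : ℝ × ℝ) : ℝ :=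
  ∫ t in Set.Ioi (0 : ℝ), h (x + t • w)

/-- The k-th moment divergent beam transform `X_w^k h (x) = ∫₀^∞ t^k h(x + t w) dt`. -/
def Xmom (k : ℕ) (w : ℝ × ℝ) (h : ℝ × ℝ → ℝ) (x : ℝ × ℝ) : ℝ :=
  ∫ t in Set.Ioi (0 : ℝ), t ^ k * h (x + t • w)

/-- The directional derivative `D_w h = w ⋅ ∇h`. -/
def Dir (w : ℝ × ℝ) (h : ℝ × ℝ → ℝ) (x : ℝ × ℝ) : ℝ :=
  fderiv ℝ h x w

/-- Support contained in the open unit disc `D1`. -/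
def SuppInDisc (h : ℝ × ℝ → ℝ) : Prop :=
  ∀ x : ℝ × ℝ, 1 ≤ x.1 ^ 2 + x.2 ^ 2 → h x = 0

/-- The longitudinal V-line transform. -/
def VlineL (u1 u2 : ℝ) (f11 f12 f22 : ℝ × ℝ → ℝ) : ℝ × ℝ → ℝ :=
  Xbeam (u1, u2) (fun y => u1 ^ 2 * f11 y + 2 * u1 * u2 * f12 y + u2 ^ 2 * f22 y)
    + Xbeam (-u1, u2) (fun y => u1 ^ 2 * f11 y - 2 * u1 * u2 * f12 y + u2 ^ 2 * f22 y)

/-- The transverse V-line transform. -/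
def VlineT (u1 u2 : ℝ) (f11 f12 f22 : ℝ × ℝ → ℝ) : ℝ × ℝ → ℝ :=
  Xbeam (u1, u2) (fun y => u2 ^ 2 * f11 y - 2 * u1 * u2 * f12 y + u1 ^ 2 * f22 y)
    + Xbeam (-u1, u2) (fun y => u2 ^ 2 * f11 y + 2 * u1 * u2 * f12 y + u1 ^ 2 * f22 y)

/-- The mixed V-line transform. -/
def VlineM (u1 u2 : ℝ) (f11 f12 f22 : ℝ × ℝ → ℝ) : ℝ × ℝ → ℝ :=
  Xbeam (u1, u2) (fun y => -(u1 * u2) * f11 y + (u1 ^ 2 - u2 ^ 2) * f12 y + u1 * u2 * f22 y)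
    + Xbeam (-u1, u2) (fun y => u1 * u2 * f11 y + (u1 ^ 2 - u2 ^ 2) * f12 y - u1 * u2 * f22 y)

/-- The k-th moment longitudinal V-line transform. -/
def VlineLk (k : ℕ) (u1 u2 : ℝ) (f11 f12 f22 : ℝ × ℝ → ℝ) : ℝ × ℝ → ℝ :=
  Xmom k (u1, u2) (fun y => u1 ^ 2 * f11 y + 2 * u1 * u2 * f12 y + u2 ^ 2 * f22 y)
    + Xmom k (-u1, u2) (fun y => u1 ^ 2 * f11 y - 2 * u1 * u2 * f12 y + u2 ^ 2 * f22 y)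

/-- The k-th moment transverse V-line transform. -/
def VlineTk (k : ℕ) (u1 u2 : ℝ) (f11 f12 f22 : ℝ × ℝ → ℝ) : ℝ × ℝ → ℝ :=
  Xmom k (u1, u2) (fun y => u2 ^ 2 * f11 y - 2 * u1 * u2 * f12 y + u1 ^ 2 * f22 y)
    + Xmom k (-u1, u2) (fun y => u2 ^ 2 * f11 y + 2 * u1 * u2 * f12 y + u1 ^ 2 * f22 y)

/-- The k-th moment mixed V-line transform. -/
def VlineMk (k : ℕ) (u1 u2 : ℝ) (f11 f12 f22 : ℝ × ℝ → ℝ) : ℝ × ℝ → ℝ :=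
  Xmom k (u1, u2) (fun y => -(u1 * u2) * f11 y + (u1 ^ 2 - u2 ^ 2) * f12 y + u1 * u2 * f22 y)
    + Xmom k (-u1, u2) (fun y => u1 * u2 * f11 y + (u1 ^ 2 - u2 ^ 2) * f12 y - u1 * u2 * f22 y)

/-!
Let `J` be the rotation by `π/2`. Then `f = (d⊥)²φ` means `f(a, b) = ∇²φ(Ja, Jb)`, so the
integrand of `X_w` in `Tf` is `f(Jw, Jw) = D_w D_w φ` and the one in `Mf` is
`f(Jw, w) = -D_w D_{Jw} φ`. For compactly supported `g`, integrating along a ray gives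
`X_w (D_w g) = -g`. Hence `Tf = -(D_u φ + D_v φ) = -2 u2 ∂₂φ` and
`Mf = D_{Ju} φ + D_{Jv} φ = -2 u2 ∂₁φ`, and one more application of `X_{e2}`, resp. `X_{e1}`,
returns `2 u2 φ`.
-/

open Set Filter Topology

section Ray

variable {E : Type*} [NormedAddCommGroup E] [NormedSpace ℝ E]

theorem isClosedEmbedding_ray (x : E) {w : E} (hw : w ≠ 0) :
    IsClosedEmbedding fun t : ℝ => x + t • w :=
  (Homeomorph.addLeft x).isClosedEmbedding.comp (isClosedEmbedding_smul_left hw)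

theorem integral_Ioi_fderiv_ray {h : E → ℝ} (hh : ContDiff ℝ 1 h) (hc : HasCompactSupport h)
    (x : E) {w : E} (hw : w ≠ 0) :
    ∫ t in Ioi (0 : ℝ), fderiv ℝ h (x + t • w) w = -h x := by
  have hray := isClosedEmbedding_ray x hw
  have hderiv (t : ℝ) :
      HasDerivAt (fun s : ℝ => h (x + s • w)) (fderiv ℝ h (x + t • w) w) t := by
    have hline : HasDerivAt (fun s : ℝ => x + s • w) w t := by
      simpa using ((hasDerivAt_id t).smul_const w).const_add x
    exact (hh.differentiable one_ne_zero _).hasFDerivAt.comp_hasDerivAt t hline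
  have hint : Integrable fun t : ℝ => fderiv ℝ h (x + t • w) w :=
    ((hh.continuous_fderiv one_ne_zero).clm_apply continuous_const).comp hray.continuous
      |>.integrable_of_hasCompactSupport ((hc.fderiv_apply ℝ w).comp_isClosedEmbedding hray)
  have hlim : Tendsto (fun t : ℝ => h (x + t • w)) atTop (𝓝 0) :=
    (hc.comp_isClosedEmbedding hray).is_zero_at_infty.mono_left atTop_le_cocompact
  simpa using integral_Ioi_of_hasDerivAt_of_tendsto (hderiv 0).continuousAt.continuousWithinAt
    (fun t _ => hderiv t) hint.integrableOn hlim

end Ray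

section SecondDerivative

variable {E : Type*} [NormedAddCommGroup E] [NormedSpace ℝ E] {φ : E → ℝ}

theorem fderiv_fderiv_apply_const {y : E} (hφ : DifferentiableAt ℝ (fderiv ℝ φ) y) (a b : E) :
    fderiv ℝ (fun z => fderiv ℝ φ z b) y a = fderiv ℝ (fderiv ℝ φ) y a b := by
  simp [fderiv_clm_apply hφ (differentiableAt_const b)]

theorem ContDiff.fderiv_apply_const (hφ : ContDiff ℝ 2 φ) (b : E) :
    ContDiff ℝ 1 fun z => fderiv ℝ φ z b :=
  (hφ.fderiv_right one_add_one_eq_two.le).clm_apply contDiff_const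

end SecondDerivative

theorem ContinuousLinearMap.apply_eq_fst_smul_add_snd_smul {M : Type*} [AddCommGroup M]
    [Module ℝ M] [TopologicalSpace M] (L : ℝ × ℝ →L[ℝ] M) (a : ℝ × ℝ) :
    L a = a.1 • L (1, 0) + a.2 • L (0, 1) := by
  rw [← L.map_smul, ← L.map_smul, ← map_add]
  simp

theorem fderiv_fderiv_apply_const_eq_sum {φ : ℝ × ℝ → ℝ} (hφ : ContDiff ℝ 2 φ)
    (y a b : ℝ × ℝ) :
    fderiv ℝ (fun z => fderiv ℝ φ z b) y a =
      a.1 * b.1 * fderiv ℝ (fun z => fderiv ℝ φ z (1, 0)) y (1, 0)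
      + (a.1 * b.2 + a.2 * b.1) * fderiv ℝ (fun z => fderiv ℝ φ z (0, 1)) y (1, 0)
      + a.2 * b.2 * fderiv ℝ (fun z => fderiv ℝ φ z (0, 1)) y (0, 1) := by
  have hd : DifferentiableAt ℝ (fderiv ℝ φ) y :=
    (hφ.fderiv_right one_add_one_eq_two.le).differentiable one_ne_zero y
  have hsymm := (hφ.contDiffAt (x := y)).isSymmSndFDerivAt (by simp)
    ((1 : ℝ), (0 : ℝ)) ((0 : ℝ), (1 : ℝ))
  simp only [fderiv_fderiv_apply_const hd]
  set D := fderiv ℝ (fderiv ℝ φ) y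
  rw [D.apply_eq_fst_smul_add_snd_smul a]
  simp only [add_apply, smul_apply, smul_eq_mul]
  rw [(D (1, 0)).apply_eq_fst_smul_add_snd_smul b, (D (0, 1)).apply_eq_fst_smul_add_snd_smul b]
  linear_combination -a.2 * b.1 * hsymm

theorem Xbeam_const_mul (c : ℝ) (w : ℝ × ℝ) (h : ℝ × ℝ → ℝ) (x : ℝ × ℝ) :
    Xbeam w (fun y => c * h y) x = c * Xbeam w h x :=
  integral_const_mul c _

theorem Xbeam_fderiv_apply_self {h : ℝ × ℝ → ℝ} (hh : ContDiff ℝ 1 h)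
    (hc : HasCompactSupport h) {w : ℝ × ℝ} (hw : w ≠ 0) (x : ℝ × ℝ) :
    Xbeam w (fun y => fderiv ℝ h y w) x = -h x :=
  integral_Ioi_fderiv_ray hh hc x hw

theorem SuppInDisc.hasCompactSupport {h : ℝ × ℝ → ℝ} (hs : SuppInDisc h) :
    HasCompactSupport h := by
  refine HasCompactSupport.intro (isCompact_closedBall 0 1) fun y hy => hs y ?_
  rw [Metric.mem_closedBall, dist_zero_right, not_le, Prod.norm_def, lt_max_iff,
    Real.norm_eq_abs, Real.norm_eq_abs] at hy
  rcases hy with hy | hy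
  · nlinarith [one_lt_sq_iff_one_lt_abs _ |>.mpr hy, sq_nonneg y.2]
  · nlinarith [one_lt_sq_iff_one_lt_abs _ |>.mpr hy, sq_nonneg y.1]

def IsDPerpSq (φ f11 f12 f22 : ℝ × ℝ → ℝ) : Prop :=
  (∀ y, f11 y = fderiv ℝ (fun z => fderiv ℝ φ z (0, 1)) y (0, 1)) ∧
  (∀ y, f12 y = -fderiv ℝ (fun z => fderiv ℝ φ z (0, 1)) y (1, 0)) ∧
  (∀ y, f22 y = fderiv ℝ (fun z => fderiv ℝ φ z (1, 0)) y (1, 0))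

section VLine

variable {u1 u2 : ℝ} {φ f11 f12 f22 : ℝ × ℝ → ℝ}

theorem Xbeam_fderiv_fderiv (hφ : ContDiff ℝ 2 φ) (hc : HasCompactSupport φ) {a : ℝ × ℝ}
    (ha : a ≠ 0) (b y : ℝ × ℝ) :
    Xbeam a (fun z => fderiv ℝ (fun w => fderiv ℝ φ w b) z a) y = -fderiv ℝ φ y b :=
  Xbeam_fderiv_apply_self (hφ.fderiv_apply_const b) (hc.fderiv_apply ℝ b) ha y

theorem VlineT_eq_of_isDPerpSq (hφ : ContDiff ℝ 2 φ) (hc : HasCompactSupport φ)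
    (hf : IsDPerpSq φ f11 f12 f22) (hu : ((u1, u2) : ℝ × ℝ) ≠ 0) (y : ℝ × ℝ) :
    VlineT u1 u2 f11 f12 f22 y = -(2 * u2) * fderiv ℝ φ y (0, 1) := by
  obtain ⟨hf11, hf12, hf22⟩ := hf
  have hv : ((-u1, u2) : ℝ × ℝ) ≠ 0 := by simpa using hu
  have integrand_u : (fun z => u2 ^ 2 * f11 z - 2 * u1 * u2 * f12 z + u1 ^ 2 * f22 z) =
      fun z => fderiv ℝ (fun w => fderiv ℝ φ w (u1, u2)) z (u1, u2) := by
    funext z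
    rw [hf11, hf12, hf22, fderiv_fderiv_apply_const_eq_sum hφ z (u1, u2) (u1, u2)]
    ring
  have integrand_v : (fun z => u2 ^ 2 * f11 z + 2 * u1 * u2 * f12 z + u1 ^ 2 * f22 z) =
      fun z => fderiv ℝ (fun w => fderiv ℝ φ w (-u1, u2)) z (-u1, u2) := by
    funext z
    rw [hf11, hf12, hf22, fderiv_fderiv_apply_const_eq_sum hφ z (-u1, u2) (-u1, u2)]
    ring
  rw [VlineT, Pi.add_apply, integrand_u, integrand_v, Xbeam_fderiv_fderiv hφ hc hu,
    Xbeam_fderiv_fderiv hφ hc hv, (fderiv ℝ φ y).apply_eq_fst_smul_add_snd_smul (u1, u2),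
    (fderiv ℝ φ y).apply_eq_fst_smul_add_snd_smul (-u1, u2)]
  simp only [smul_eq_mul]
  ring

theorem VlineM_eq_of_isDPerpSq (hφ : ContDiff ℝ 2 φ) (hc : HasCompactSupport φ)
    (hf : IsDPerpSq φ f11 f12 f22) (hu : ((u1, u2) : ℝ × ℝ) ≠ 0) (y : ℝ × ℝ) :
    VlineM u1 u2 f11 f12 f22 y = -(2 * u2) * fderiv ℝ φ y (1, 0) := by
  obtain ⟨hf11, hf12, hf22⟩ := hf
  have hv : ((-u1, u2) : ℝ × ℝ) ≠ 0 := by simpa using hu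
  have integrand_u :
      (fun z => -(u1 * u2) * f11 z + (u1 ^ 2 - u2 ^ 2) * f12 z + u1 * u2 * f22 z) =
      fun z => fderiv ℝ (fun w => fderiv ℝ φ w (u2, -u1)) z (u1, u2) := by
    funext z
    rw [hf11, hf12, hf22, fderiv_fderiv_apply_const_eq_sum hφ z (u1, u2) (u2, -u1)]
    ring
  have integrand_v :
      (fun z => u1 * u2 * f11 z + (u1 ^ 2 - u2 ^ 2) * f12 z - u1 * u2 * f22 z) =
      fun z => fderiv ℝ (fun w => fderiv ℝ φ w (u2, u1)) z (-u1, u2) := by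
    funext z
    rw [hf11, hf12, hf22, fderiv_fderiv_apply_const_eq_sum hφ z (-u1, u2) (u2, u1)]
    ring
  rw [VlineM, Pi.add_apply, integrand_u, integrand_v, Xbeam_fderiv_fderiv hφ hc hu,
    Xbeam_fderiv_fderiv hφ hc hv, (fderiv ℝ φ y).apply_eq_fst_smul_add_snd_smul (u2, -u1),
    (fderiv ℝ φ y).apply_eq_fst_smul_add_snd_smul (u2, u1)]
  simp only [smul_eq_mul]
  ring

end VLine

theorem recover_potential_dperp2_general
    (u1 u2 : ℝ) (hu2 : 0 < u2)
    (φ : ℝ × ℝ → ℝ) (hφ : ContDiff ℝ 2 φ) (hsupp : SuppInDisc φ)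
    (f11 f12 f22 : ℝ × ℝ → ℝ)
    (hf11 : ∀ y : ℝ × ℝ, f11 y =
      fderiv ℝ (fun z => fderiv ℝ φ z ((0 : ℝ), (1 : ℝ))) y ((0 : ℝ), (1 : ℝ)))
    (hf12 : ∀ y : ℝ × ℝ, f12 y =
      -fderiv ℝ (fun z => fderiv ℝ φ z ((0 : ℝ), (1 : ℝ))) y ((1 : ℝ), (0 : ℝ)))
    (hf22 : ∀ y : ℝ × ℝ, f22 y =
      fderiv ℝ (fun z => fderiv ℝ φ z ((1 : ℝ), (0 : ℝ))) y ((1 : ℝ), (0 : ℝ)))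
    (x : ℝ × ℝ) :
    φ x = (1 / (2 * u2)) * Xbeam ((0 : ℝ), (1 : ℝ)) (VlineT u1 u2 f11 f12 f22) x ∧
    φ x = (1 / (2 * u2)) * Xbeam ((1 : ℝ), (0 : ℝ)) (VlineM u1 u2 f11 f12 f22) x := by
  have hc := hsupp.hasCompactSupport
  have hf : IsDPerpSq φ f11 f12 f22 := ⟨hf11, hf12, hf22⟩
  have hu : ((u1, u2) : ℝ × ℝ) ≠ 0 := fun h => hu2.ne' (congrArg Prod.snd h)
  have hφ1 : ContDiff ℝ 1 φ := hφ.of_le one_le_two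
  have hT : VlineT u1 u2 f11 f12 f22 = fun y => -(2 * u2) * fderiv ℝ φ y (0, 1) :=
    funext (VlineT_eq_of_isDPerpSq hφ hc hf hu)
  have hM : VlineM u1 u2 f11 f12 f22 = fun y => -(2 * u2) * fderiv ℝ φ y (1, 0) :=
    funext (VlineM_eq_of_isDPerpSq hφ hc hf hu)
  rw [hT, hM, Xbeam_const_mul, Xbeam_const_mul, Xbeam_fderiv_apply_self hφ1 hc (by simp),
    Xbeam_fderiv_apply_self hφ1 hc (by simp)]
  constructor <;> field_simp

/-- reconstruction of a potential `φ` with `f = (d⊥)²φ` from `Tf` or `Mf`. -/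
theorem recover_potential_dperp2
    (u1 u2 : ℝ) (hu : u1 ^ 2 + u2 ^ 2 = 1) (hu1 : 0 < u1) (hu2 : 0 < u2)
    (φ : ℝ × ℝ → ℝ) (hφ : ContDiff ℝ 2 φ) (hsupp : SuppInDisc φ)
    (f11 f12 f22 : ℝ × ℝ → ℝ)
    (hf11 : ∀ y : ℝ × ℝ, f11 y =
      fderiv ℝ (fun z => fderiv ℝ φ z ((0 : ℝ), (1 : ℝ))) y ((0 : ℝ), (1 : ℝ)))
    (hf12 : ∀ y : ℝ × ℝ, f12 y =
      -fderiv ℝ (fun z => fderiv ℝ φ z ((0 : ℝ), (1 : ℝ))) y ((1 : ℝ), (0 : ℝ)))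
    (hf22 : ∀ y : ℝ × ℝ, f22 y =
      fderiv ℝ (fun z => fderiv ℝ φ z ((1 : ℝ), (0 : ℝ))) y ((1 : ℝ), (0 : ℝ)))
    (x : ℝ × ℝ) :
    φ x = (1 / (2 * u2)) * Xbeam ((0 : ℝ), (1 : ℝ)) (VlineT u1 u2 f11 f12 f22) x ∧
    φ x = (1 / (2 * u2)) * Xbeam ((1 : ℝ), (0 : ℝ)) (VlineM u1 u2 f11 f12 f22) x :=
  recover_potential_dperp2_general u1 u2 hu2 φ hφ hsupp f11 f12 f22 hf11 hf12 hf22 x
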